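/- Let d, M be positive integers, N = d+1, and for each 1 ≤ n ≤ M let A_n be a tensor of order n. Let W : ℝ × ℝ^d → ℝ^N be of class C^{M+1} (jointly in time and space) and suppose W satisfies the PDE system ∂_t W^i (t,x) + Σ_{n=1}^M (A_n : ∇^n W)^i (t,x) = 0 for all (t,x) ∈ ℝ × ℝ^d and all 1 ≤ i ≤ N, where the spatial derivatives are taken at fixed t. Let r ∈ O_d(ℝ), R(r) = Diag(1, r), and define W̃(t, x̃) = (R(r))⁻¹ · W(t, r x̃). Then W̃ satisfies ∂_t W̃^i (t,x̃) + Σ_{n=1}^M (Ã_n : ∇^n W̃)^i (t,x̃) = 0 for all (t,x̃) and all i, where Ã_n = Φ_n(r⁻¹)(A_n) for each 1 ≤ n ≤ M. -/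

import Mathlib

open Matrix

noncomputable section

/-- The block-diagonal `(d+1) × (d+1)` matrix `R(r) = Diag(1, r)` with upper-left
`1 × 1` block equal to `1` and lower-right `d × d` block equal to `r`. -/
def diagOne {d : ℕ} (r : Matrix (Fin d) (Fin d) ℝ) :
    Matrix (Fin (d + 1)) (Fin (d + 1)) ℝ :=
  Matrix.of fun i j =>
    if hi : i = 0 then (if j = 0 then (1 : ℝ) else 0)
    else if hj : j = 0 then 0 else r (i.pred hi) (j.pred hj)

/-- The action `Φ_n(r)` of a `d × d` matrix `r` on tensors of order `n`:
`(Φ_n(r)(A))^{i,α_1,…,α_n}_j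
  = Σ_{β,k,l} (R(r))^i_l A^{l,β_1,…,β_n}_k r^{α_1}_{β_1} ⋯ r^{α_n}_{β_n} ((R(r))⁻¹)^k_j`,
where `R(r) = Diag(1, r)`. -/
def Phi {d n : ℕ} (r : Matrix (Fin d) (Fin d) ℝ)
    (A : Fin (d + 1) → Fin (d + 1) → (Fin n → Fin d) → ℝ) :
    Fin (d + 1) → Fin (d + 1) → (Fin n → Fin d) → ℝ :=
  fun i j α =>
    ∑ l : Fin (d + 1), ∑ k : Fin (d + 1), ∑ β : Fin n → Fin d,
      diagOne r i l * A l k β * (∏ m : Fin n, r (α m) (β m)) * (diagOne r)⁻¹ k j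

/-- The `n`-th iterated spatial partial derivative `∂_{α_1} ⋯ ∂_{α_n} f (x)` of
`f : ℝ^d → ℝ` along standard basis directions: the `n`-th iterated Fréchet
derivative applied to `(e_{α_1}, …, e_{α_n})`. -/
def iterPartial {d : ℕ} (n : ℕ) (f : (Fin d → ℝ) → ℝ) (x : Fin d → ℝ)
    (α : Fin n → Fin d) : ℝ :=
  iteratedFDeriv ℝ n f x (fun m => Pi.single (α m) (1 : ℝ))

/-- The maximal contraction at fixed time `t`:
`(A : ∇^n W)^i (t, x)
  = Σ_j Σ_{α_1,…,α_n} A^{i,α_1,…,α_n}_j ∂_{α_1} ⋯ ∂_{α_n} W^j (t, x)`,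
the spatial derivatives being taken at fixed `t`. -/
def contractT {d : ℕ} (n : ℕ)
    (A : Fin (d + 1) → Fin (d + 1) → (Fin n → Fin d) → ℝ)
    (W : ℝ × (Fin d → ℝ) → (Fin (d + 1) → ℝ)) (t : ℝ) (x : Fin d → ℝ)
    (i : Fin (d + 1)) : ℝ :=
  ∑ j : Fin (d + 1), ∑ α : Fin n → Fin d,
    A i j α * iterPartial n (fun y => W (t, y) j) x α

/-!
Flatten a tensor `A` of order `n` into the matrix `A♭ : ℝ^N → ℝ^N ⊗ (ℝ^d)^{⊗n}` and the `n`-th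
spatial derivatives of `W` into the vector `∇ⁿW ∈ ℝ^N ⊗ (ℝ^d)^{⊗n}`, so that `A : ∇ⁿW = A♭ ∇ⁿW`.
By the chain rule `∇ⁿW̃(t, x̃) = (R(r)⁻¹ ⊗ (r^{⊗n})ᵀ) ∇ⁿW(t, r x̃)`, while
`Φ_n(r⁻¹)(A)♭ = R(r)⁻¹ A♭ (R(r) ⊗ ((r⁻¹)^{⊗n})ᵀ)`. The two Kronecker factors cancel, so each term of
the transformed system at `(t, x̃)` is `R(r)⁻¹` applied to the same term of the original system
at `(t, r x̃)`.
-/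

open scoped Kronecker

namespace Matrix

def tensorPow {ι ι' R : Type*} [CommMonoid R] (κ : Type*) [Fintype κ] (r : Matrix ι ι' R) :
    Matrix (κ → ι) (κ → ι') R :=
  of fun γ α => ∏ m, r (γ m) (α m)

variable {κ ι ι' ι'' R : Type*} [Fintype κ] [CommSemiring R]

theorem tensorPow_mul [DecidableEq κ] [Fintype ι'] (r : Matrix ι ι' R) (s : Matrix ι' ι'' R) :
    tensorPow κ (r * s) = tensorPow κ r * tensorPow κ s := by
  ext γ α
  simp only [tensorPow, of_apply, mul_apply, Fintype.prod_sum, Finset.prod_mul_distrib]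

theorem tensorPow_one [DecidableEq ι] : tensorPow κ (1 : Matrix ι ι R) = 1 := by
  ext γ α
  simp only [tensorPow, of_apply, one_apply, Fintype.prod_boole, funext_iff]

end Matrix

theorem diagOne_mul {d : ℕ} (r s : Matrix (Fin d) (Fin d) ℝ) :
    diagOne r * diagOne s = diagOne (r * s) := by
  ext i j
  cases i using Fin.cases <;> cases j using Fin.cases <;>
    simp [diagOne, mul_apply, Fin.sum_univ_succ]

theorem diagOne_one {d : ℕ} : diagOne (1 : Matrix (Fin d) (Fin d) ℝ) = 1 := by
  ext i j
  cases i using Fin.cases <;> cases j using Fin.cases <;>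
    simp [diagOne, one_apply, Fin.succ_ne_zero, eq_comm]

theorem diagOne_inv {d : ℕ} {r : Matrix (Fin d) (Fin d) ℝ} (hr : IsUnit r.det) :
    (diagOne r)⁻¹ = diagOne r⁻¹ :=
  inv_eq_right_inv (by rw [diagOne_mul, mul_nonsing_inv r hr, diagOne_one])

def tensorMatrix {d n : ℕ} (A : Fin (d + 1) → Fin (d + 1) → (Fin n → Fin d) → ℝ) :
    Matrix (Fin (d + 1)) (Fin (d + 1) × (Fin n → Fin d)) ℝ :=
  of fun i p => A i p.1 p.2

def spatialJet {d : ℕ} (n : ℕ) (W : ℝ × (Fin d → ℝ) → (Fin (d + 1) → ℝ)) (t : ℝ)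
    (x : Fin d → ℝ) : Fin (d + 1) × (Fin n → Fin d) → ℝ :=
  fun p => iterPartial n (fun y => W (t, y) p.1) x p.2

theorem contractT_eq_mulVec {d : ℕ} (n : ℕ)
    (A : Fin (d + 1) → Fin (d + 1) → (Fin n → Fin d) → ℝ)
    (W : ℝ × (Fin d → ℝ) → (Fin (d + 1) → ℝ)) (t : ℝ) (x : Fin d → ℝ) :
    contractT n A W t x = tensorMatrix A *ᵥ spatialJet n W t x := by
  ext i
  simp only [contractT, tensorMatrix, spatialJet, mulVec, dotProduct, of_apply,
    Fintype.sum_prod_type]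

theorem tensorMatrix_Phi {d n : ℕ} (s : Matrix (Fin d) (Fin d) ℝ)
    (A : Fin (d + 1) → Fin (d + 1) → (Fin n → Fin d) → ℝ) :
    tensorMatrix (Phi s A)
      = diagOne s * tensorMatrix A * ((diagOne s)⁻¹ ⊗ₖ (tensorPow (Fin n) s)ᵀ) := by
  ext i ⟨j, α⟩
  simp only [tensorMatrix, Phi, tensorPow, mul_apply, kronecker_apply, transpose_apply, of_apply,
    Fintype.sum_prod_type, Finset.sum_mul]
  rw [Finset.sum_comm]
  refine Finset.sum_congr rfl fun k _ => ?_
  rw [Finset.sum_comm]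
  exact Finset.sum_congr rfl fun β _ => Finset.sum_congr rfl fun l _ => by ring

theorem iterPartial_comp_mulVec {d d' n : ℕ} (r : Matrix (Fin d) (Fin d') ℝ)
    {f : (Fin d → ℝ) → ℝ} (hf : ContDiff ℝ n f) (x : Fin d' → ℝ) :
    iterPartial n (fun y => f (r *ᵥ y)) x = (tensorPow (Fin n) r)ᵀ *ᵥ iterPartial n f (r *ᵥ x) := by
  set L : (Fin d' → ℝ) →L[ℝ] (Fin d → ℝ) := LinearMap.toContinuousLinearMap r.mulVecLin
  have hL : ∀ a, L (Pi.single a 1) = ∑ b, r b a • Pi.single b (1 : ℝ) := fun a => by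
    ext c
    simp [L, mulVec, dotProduct, Pi.single_apply]
  ext α
  change iteratedFDeriv ℝ n (f ∘ L) x _ = _
  rw [L.iteratedFDeriv_comp_right hf x le_rfl,
    ContinuousMultilinearMap.compContinuousLinearMap_apply]
  simp only [hL, ContinuousMultilinearMap.map_sum, ContinuousMultilinearMap.map_smul_univ,
    smul_eq_mul, mulVec, dotProduct, transpose_apply, tensorPow, of_apply, iterPartial]
  rfl

theorem iterPartial_mulVec_apply {d n : ℕ} {ι κ : Type*} [Fintype κ] (B : Matrix ι κ ℝ)
    {f : (Fin d → ℝ) → κ → ℝ} (hf : ∀ k, ContDiff ℝ n fun y => f y k) (x : Fin d → ℝ) (j : ι)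
    (α : Fin n → Fin d) :
    iterPartial n (fun y => (B *ᵥ f y) j) x α
      = (B *ᵥ fun k => iterPartial n (fun y => f y k) x α) j := by
  have hsmul : ∀ k, iteratedFDeriv ℝ n (fun y => B j k • f y k) x
      = B j k • iteratedFDeriv ℝ n (fun y => f y k) x :=
    fun k => iteratedFDeriv_const_smul_apply' (hf k).contDiffAt
  simp only [iterPartial, mulVec, dotProduct, ← smul_eq_mul (B j _)]
  rw [iteratedFDeriv_fun_sum_apply fun k _ => ((hf k).const_smul (B j k)).contDiffAt]
  simp only [_root_.sum_apply, hsmul, _root_.smul_apply]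

theorem spatialJet_mulVec_comp_mulVec {d n : ℕ} (B : Matrix (Fin (d + 1)) (Fin (d + 1)) ℝ)
    (r : Matrix (Fin d) (Fin d) ℝ) {W : ℝ × (Fin d → ℝ) → (Fin (d + 1) → ℝ)} {t : ℝ}
    (hW : ∀ k, ContDiff ℝ n fun y => W (t, y) k) (x : Fin d → ℝ) :
    spatialJet n (fun p => B *ᵥ W (p.1, r *ᵥ p.2)) t x
      = (B ⊗ₖ (tensorPow (Fin n) r)ᵀ) *ᵥ spatialJet n W t (r *ᵥ x) := by
  have hWr : ∀ k, ContDiff ℝ n fun y => W (t, r *ᵥ y) k :=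
    fun k => (hW k).comp (LinearMap.toContinuousLinearMap r.mulVecLin).contDiff
  ext ⟨j, α⟩
  simp only [spatialJet, iterPartial_mulVec_apply B hWr, iterPartial_comp_mulVec r (hW _)]
  simp only [mulVec, dotProduct, kronecker_apply, Fintype.sum_prod_type, Finset.mul_sum, mul_assoc,
    spatialJet]

theorem contractT_Phi_inv_rotated {d n : ℕ} {r : Matrix (Fin d) (Fin d) ℝ} (hr : IsUnit r.det)
    (A : Fin (d + 1) → Fin (d + 1) → (Fin n → Fin d) → ℝ)
    {W : ℝ × (Fin d → ℝ) → (Fin (d + 1) → ℝ)} {t : ℝ}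
    (hW : ∀ k, ContDiff ℝ n fun y => W (t, y) k) (x : Fin d → ℝ) :
    contractT n (Phi r⁻¹ A) (fun p => (diagOne r)⁻¹ *ᵥ W (p.1, r *ᵥ p.2)) t x
      = (diagOne r)⁻¹ *ᵥ contractT n A W t (r *ᵥ x) := by
  have hcancel : (diagOne r ⊗ₖ (tensorPow (Fin n) r⁻¹)ᵀ) * (diagOne r⁻¹ ⊗ₖ (tensorPow (Fin n) r)ᵀ)
      = 1 := by
    rw [← mul_kronecker_mul, ← transpose_mul, ← tensorPow_mul, diagOne_mul, mul_nonsing_inv r hr,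
      diagOne_one, tensorPow_one, transpose_one, one_kronecker_one]
  rw [contractT_eq_mulVec, contractT_eq_mulVec, tensorMatrix_Phi,
    diagOne_inv (isUnit_nonsing_inv_det r hr), nonsing_inv_nonsing_inv r hr, diagOne_inv hr,
    spatialJet_mulVec_comp_mulVec _ r hW, mulVec_mulVec, Matrix.mul_assoc, hcancel, Matrix.mul_one,
    mulVec_mulVec]

theorem deriv_mulVec_apply {ι κ : Type*} [Fintype κ] (B : Matrix ι κ ℝ) {f : ℝ → κ → ℝ} {t : ℝ}
    (hf : ∀ k, DifferentiableAt ℝ (fun s => f s k) t) (i : ι) :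
    deriv (fun s => (B *ᵥ f s) i) t = (B *ᵥ fun k => deriv (fun s => f s k) t) i := by
  simp only [mulVec, dotProduct]
  rw [deriv_fun_sum fun k _ => (hf k).const_mul _]
  exact Finset.sum_congr rfl fun k _ => deriv_const_mul _ (hf k)

theorem pde_system_rotation_general (d M : ℕ)
    (A : (n : ℕ) → Fin (d + 1) → Fin (d + 1) → (Fin n → Fin d) → ℝ)
    (W : ℝ × (Fin d → ℝ) → (Fin (d + 1) → ℝ))
    (hW : ContDiff ℝ (M + 1) W)
    (hpde : ∀ (t : ℝ) (x : Fin d → ℝ) (i : Fin (d + 1)),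
      deriv (fun s => W (s, x) i) t
        + ∑ n ∈ Finset.Icc 1 M, contractT n (A n) W t x i = 0)
    (r : Matrix (Fin d) (Fin d) ℝ) (hr : rᵀ * r = 1) :
    ∀ (t : ℝ) (xt : Fin d → ℝ) (i : Fin (d + 1)),
      deriv (fun s => (diagOne r)⁻¹.mulVec (W (s, r.mulVec xt)) i) t
        + ∑ n ∈ Finset.Icc 1 M,
            contractT n (Phi r⁻¹ (A n))
              (fun p => (diagOne r)⁻¹.mulVec (W (p.1, r.mulVec p.2))) t xt i = 0 := by
  intro t xt i
  have hspace : ∀ n ∈ Finset.Icc 1 M, ∀ k, ContDiff ℝ n fun y => W (t, y) k := fun n hn k =>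
    ((contDiff_pi.1 hW k).comp (contDiff_const.prodMk contDiff_id)).of_le
      (by exact_mod_cast (Finset.mem_Icc.1 hn).2.trans M.le_succ)
  have htime : ∀ k, DifferentiableAt ℝ (fun s => W (s, r *ᵥ xt) k) t := fun k =>
    (((contDiff_pi.1 hW k).comp (contDiff_id.prodMk contDiff_const)).differentiable
      (by simp)).differentiableAt
  have hvec : (fun l => deriv (fun s => W (s, r *ᵥ xt) l) t)
      + ∑ n ∈ Finset.Icc 1 M, contractT n (A n) W t (r *ᵥ xt) = 0 :=
    funext fun l => by simpa using hpde t (r *ᵥ xt) l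
  rw [deriv_mulVec_apply _ htime, Finset.sum_congr rfl fun n hn =>
    congrFun (contractT_Phi_inv_rotated (isUnit_det_of_left_inverse hr) (A n) (hspace n hn) xt) i]
  calc _ = ((diagOne r)⁻¹ *ᵥ ((fun l => deriv (fun s => W (s, r *ᵥ xt) l) t)
          + ∑ n ∈ Finset.Icc 1 M, contractT n (A n) W t (r *ᵥ xt))) i := by
        rw [mulVec_add, mulVec_sum, Pi.add_apply, Finset.sum_apply]
    _ = 0 := by rw [hvec, mulVec_zero, Pi.zero_apply]

/-- If `W : ℝ × ℝ^d → ℝ^N` (`N = d + 1`) is of class `C^{M+1}` and satisfies the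
PDE system `∂_t W^i + Σ_{n=1}^M (A_n : ∇^n W)^i = 0`, and `r ∈ O_d(ℝ)`, then the
rotated function `W̃(t, x̃) = (R(r))⁻¹ W(t, r x̃)` satisfies
`∂_t W̃^i + Σ_{n=1}^M (Ã_n : ∇^n W̃)^i = 0` with `Ã_n = Φ_n(r⁻¹)(A_n)`. -/
theorem pde_system_rotation (d M : ℕ) (hd : 0 < d) (hM : 0 < M)
    (A : (n : ℕ) → Fin (d + 1) → Fin (d + 1) → (Fin n → Fin d) → ℝ)
    (W : ℝ × (Fin d → ℝ) → (Fin (d + 1) → ℝ))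
    (hW : ContDiff ℝ (M + 1) W)
    (hpde : ∀ (t : ℝ) (x : Fin d → ℝ) (i : Fin (d + 1)),
      deriv (fun s => W (s, x) i) t
        + ∑ n ∈ Finset.Icc 1 M, contractT n (A n) W t x i = 0)
    (r : Matrix (Fin d) (Fin d) ℝ) (hr : rᵀ * r = 1) :
    ∀ (t : ℝ) (xt : Fin d → ℝ) (i : Fin (d + 1)),
      deriv (fun s => (diagOne r)⁻¹.mulVec (W (s, r.mulVec xt)) i) t
        + ∑ n ∈ Finset.Icc 1 M,
            contractT n (Phi r⁻¹ (A n))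
              (fun p => (diagOne r)⁻¹.mulVec (W (p.1, r.mulVec p.2))) t xt i = 0 :=
  pde_system_rotation_general d M A W hW hpde r hr
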